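/- Let f : ℝ → ℝ be convex differentiable on J, A₁,…,Aₙ self-adjoint with spectra in J, and w₁,…,wₙ positive reals summing to 1. Define δ = sup over unit vectors x of (⟨∑ᵢ wᵢ f'(Aᵢ)Aᵢ x, x⟩ − ⟨∑ᵢ wᵢ Aᵢ x, x⟩·⟨∑ᵢ wᵢ f'(Aᵢ) x, x⟩). Then ∑ᵢ wᵢ f(Aᵢ) ≤ f(∑ᵢ wᵢ Aᵢ) + δ·1. -/

import Mathlib

/-! For a unit vector `x` put `s = ⟪(∑ wᵢ Aᵢ) x, x⟫`, a point of `J`. The tangent line of `f` at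
`t`, evaluated at `s`, gives `f t ≤ f' t * t - s * f' t + f s` on `J`; by the functional calculus
`f(Aᵢ) ≤ f'(Aᵢ) Aᵢ - s f'(Aᵢ) + f(s)`, and averaging and pairing with `x` bounds
`⟪∑ wᵢ f(Aᵢ) x, x⟫` by the quantity under the supremum defining `δ`, plus `f s`. The tangent line
at `s` gives `f s ≤ ⟪f(∑ wᵢ Aᵢ) x, x⟫` in the same way. -/

open scoped InnerProductSpace
open RCLike

theorem ConvexOn.add_mul_sub_le_of_hasDerivAt {J : Set ℝ} {f f' : ℝ → ℝ} (hf : ConvexOn ℝ J f)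
    (hf' : ∀ t ∈ J, HasDerivAt f (f' t) t) {s t : ℝ} (hs : s ∈ J) (ht : t ∈ J) :
    f s + f' s * (t - s) ≤ f t := by
  rcases lt_trichotomy s t with hst | rfl | hts
  · have := hf.le_slope_of_hasDerivAt hs ht hst (hf' s hs)
    rw [slope_def_field, le_div_iff₀ (sub_pos.mpr hst)] at this
    linarith
  · simp
  · have := hf.slope_le_of_hasDerivAt ht hs hts (hf' s hs)
    rw [slope_def_field, div_le_iff₀ (sub_pos.mpr hts)] at this
    linarith

section CStarAlgebra

variable {A : Type*} [CStarAlgebra A] [PartialOrder A] [StarOrderedRing A]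

theorem IsSelfAdjoint.exists_algebraMap_le_le_algebraMap [Nontrivial A] {a : A}
    (ha : IsSelfAdjoint a) :
    ∃ m ∈ spectrum ℝ a, ∃ M ∈ spectrum ℝ a, algebraMap ℝ A m ≤ a ∧ a ≤ algebraMap ℝ A M := by
  have hne := ContinuousFunctionalCalculus.spectrum_nonempty (R := ℝ) a ha
  have hcpt := spectrum.isCompact (𝕜 := ℝ) a
  exact ⟨_, hcpt.sInf_mem hne, _, hcpt.sSup_mem hne,
    algebraMap_le_of_le_spectrum fun t ht => csInf_le hcpt.bddBelow ht,
    le_algebraMap_of_spectrum_le fun t ht => le_csSup hcpt.bddAbove ht⟩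

theorem spectrum_sum_smul_subset_of_convex {ι : Type*} [Fintype ι] {J : Set ℝ} (hJ : Convex ℝ J)
    {a : ι → A} (ha : ∀ i, IsSelfAdjoint (a i)) (hσ : ∀ i, spectrum ℝ (a i) ⊆ J)
    {w : ι → ℝ} (hw : ∀ i, 0 ≤ w i) (hw1 : ∑ i, w i = 1) :
    spectrum ℝ (∑ i, w i • a i) ⊆ J := by
  rcases subsingleton_or_nontrivial A with _ | _
  · simp [spectrum.of_subsingleton]
  choose m hm M hM hma haM using fun i => (ha i).exists_algebraMap_le_le_algebraMap
  have hsa : IsSelfAdjoint (∑ i, w i • a i) :=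
    isSelfAdjoint_sum _ fun i _ => (IsSelfAdjoint.all (w i)).smul (ha i)
  have hlow : algebraMap ℝ A (∑ i, w i * m i) ≤ ∑ i, w i • a i := by
    simp only [map_sum, map_mul, ← Algebra.smul_def]
    exact Finset.sum_le_sum fun i _ => smul_le_smul_of_nonneg_left (hma i) (hw i)
  have hupp : ∑ i, w i • a i ≤ algebraMap ℝ A (∑ i, w i * M i) := by
    simp only [map_sum, map_mul, ← Algebra.smul_def]
    exact Finset.sum_le_sum fun i _ => smul_le_smul_of_nonneg_left (haM i) (hw i)
  intro t ht
  exact hJ.ordConnected.out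
    (hJ.sum_mem (fun i _ => hw i) hw1 fun i _ => hσ i (hm i))
    (hJ.sum_mem (fun i _ => hw i) hw1 fun i _ => hσ i (hM i))
    ⟨(algebraMap_le_iff_le_spectrum hsa).mp hlow t ht,
      (le_algebraMap_iff_spectrum_le hsa).mp hupp t ht⟩

variable {J : Set ℝ} {f f' : ℝ → ℝ} {a : A}

theorem algebraMap_add_smul_sub_le_cfc (hf : ConvexOn ℝ J f)
    (hf' : ∀ t ∈ J, HasDerivAt f (f' t) t) (ha : IsSelfAdjoint a) (hσ : spectrum ℝ a ⊆ J)
    {s : ℝ} (hs : s ∈ J) :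
    algebraMap ℝ A (f s) + f' s • (a - algebraMap ℝ A s) ≤ cfc f a := by
  have hfc : ContinuousOn f (spectrum ℝ a) := fun t ht =>
    (hf' t (hσ ht)).continuousAt.continuousWithinAt
  have htangent : cfc (fun t => (f s - f' s * s) + f' s * t) a
      = algebraMap ℝ A (f s) + f' s • (a - algebraMap ℝ A s) := by
    rw [cfc_const_add _ _ a, cfc_const_mul_id _ a, map_sub, map_mul, ← Algebra.smul_def, smul_sub]
    abel
  rw [← htangent]
  exact cfc_mono fun t ht => by
    have := hf.add_mul_sub_le_of_hasDerivAt hf' hs (hσ ht)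
    linarith

theorem cfc_le_cfc_mul_sub_smul_add_algebraMap (hf : ConvexOn ℝ J f)
    (hf' : ∀ t ∈ J, HasDerivAt f (f' t) t) (hf'c : ContinuousOn f' J) (ha : IsSelfAdjoint a)
    (hσ : spectrum ℝ a ⊆ J) {s : ℝ} (hs : s ∈ J) :
    cfc f a ≤ cfc f' a * a - s • cfc f' a + algebraMap ℝ A (f s) := by
  have hfc : ContinuousOn f (spectrum ℝ a) := fun t ht =>
    (hf' t (hσ ht)).continuousAt.continuousWithinAt
  have hf'σ : ContinuousOn f' (spectrum ℝ a) := hf'c.mono hσ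
  have htangent : cfc (fun t => (f' t * t - s * f' t) + f s) a
      = cfc f' a * a - s • cfc f' a + algebraMap ℝ A (f s) := by
    rw [cfc_add_const _ _ a, cfc_sub _ _ a, cfc_mul f' (fun t => t) a, cfc_id' ℝ a,
      cfc_const_mul s f' a]
  rw [← htangent]
  exact cfc_mono fun t ht => by
    have := hf.add_mul_sub_le_of_hasDerivAt hf' (hσ ht) hs
    linarith

theorem sum_smul_cfc_le {ι : Type*} [Fintype ι] (hf : ConvexOn ℝ J f)
    (hf' : ∀ t ∈ J, HasDerivAt f (f' t) t) (hf'c : ContinuousOn f' J) {a : ι → A}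
    (ha : ∀ i, IsSelfAdjoint (a i)) (hσ : ∀ i, spectrum ℝ (a i) ⊆ J)
    {w : ι → ℝ} (hw : ∀ i, 0 ≤ w i) (hw1 : ∑ i, w i = 1) {s : ℝ} (hs : s ∈ J) :
    ∑ i, w i • cfc f (a i) ≤
      ∑ i, w i • (cfc f' (a i) * a i) - s • ∑ i, w i • cfc f' (a i) + algebraMap ℝ A (f s) :=
  calc ∑ i, w i • cfc f (a i)
      ≤ ∑ i, w i • (cfc f' (a i) * a i - s • cfc f' (a i) + algebraMap ℝ A (f s)) :=
        Finset.sum_le_sum fun i _ => smul_le_smul_of_nonneg_left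
          (cfc_le_cfc_mul_sub_smul_add_algebraMap hf hf' hf'c (ha i) (hσ i) hs) (hw i)
    _ = _ := by
        simp only [smul_add, smul_sub, Finset.sum_add_distrib, Finset.sum_sub_distrib,
          ← Finset.sum_smul, hw1, one_smul, Finset.smul_sum, smul_comm s]

end CStarAlgebra

namespace ContinuousLinearMap

section RCLike

variable {𝕜 E : Type*} [RCLike 𝕜] [NormedAddCommGroup E] [InnerProductSpace 𝕜 E]

theorem abs_reApplyInnerSelf_le (T : E →L[𝕜] E) (x : E) :
    |T.reApplyInnerSelf x| ≤ ‖T‖ * ‖x‖ ^ 2 :=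
  calc |T.reApplyInnerSelf x| ≤ ‖⟪T x, x⟫_𝕜‖ := RCLike.abs_re_le_norm _
    _ ≤ ‖T x‖ * ‖x‖ := norm_inner_le_norm _ _
    _ ≤ ‖T‖ * ‖x‖ * ‖x‖ := by gcongr; exact T.le_opNorm x
    _ = ‖T‖ * ‖x‖ ^ 2 := by ring

theorem bddAbove_range_re_inner_sub_mul (B T S : E →L[𝕜] E) :
    BddAbove (Set.range fun x : {x : E // ‖x‖ = 1} =>
      re ⟪B x, x⟫_𝕜 - re ⟪T x, x⟫_𝕜 * re ⟪S x, x⟫_𝕜) := by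
  refine ⟨‖B‖ + ‖T‖ * ‖S‖, Set.forall_mem_range.mpr fun ⟨x, hx⟩ => ?_⟩
  have hB := B.abs_reApplyInnerSelf_le x
  have hT := T.abs_reApplyInnerSelf_le x
  have hS := S.abs_reApplyInnerSelf_le x
  simp only [hx, one_pow, mul_one, reApplyInnerSelf_apply] at hB hT hS
  have hTS : |re ⟪T x, x⟫_𝕜 * re ⟪S x, x⟫_𝕜| ≤ ‖T‖ * ‖S‖ := by
    rw [abs_mul]
    exact mul_le_mul hT hS (abs_nonneg _) (norm_nonneg _)
  linarith [(abs_le.mp hB).2, (abs_le.mp hTS).1]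

theorem le_of_forall_norm_eq_one_re_inner_le [CompleteSpace E] {T S : E →L[𝕜] E}
    (hT : IsSelfAdjoint T) (hS : IsSelfAdjoint S)
    (h : ∀ x, ‖x‖ = 1 → re ⟪T x, x⟫_𝕜 ≤ re ⟪S x, x⟫_𝕜) : T ≤ S := by
  refine (le_def T S).mpr (isPositive_def'.mpr ⟨hS.sub hT, fun x => ?_⟩)
  rcases eq_or_ne x 0 with rfl | hx
  · simp [reApplyInnerSelf_apply]
  have hx' : ‖x‖ ≠ 0 := norm_ne_zero_iff.mpr hx
  have hu : ‖((‖x‖⁻¹ : ℝ) : 𝕜) • x‖ = 1 := by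
    rw [norm_smul, RCLike.norm_ofReal, abs_inv, abs_norm, inv_mul_cancel₀ hx']
  have hxu : x = ((‖x‖ : ℝ) : 𝕜) • ((‖x‖⁻¹ : ℝ) : 𝕜) • x := by
    rw [smul_smul, ← RCLike.ofReal_mul, mul_inv_cancel₀ hx', RCLike.ofReal_one, one_smul]
  have hdiff : 0 ≤ (S - T).reApplyInnerSelf (((‖x‖⁻¹ : ℝ) : 𝕜) • x) := by
    simpa only [reApplyInnerSelf_apply, sub_apply, inner_sub_left, map_sub, sub_nonneg]
      using h _ hu
  rw [hxu, reApplyInnerSelf_smul]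
  positivity

end RCLike

section Complex

variable {H : Type*} [NormedAddCommGroup H] [InnerProductSpace ℂ H]

noncomputable def reApplyInnerSelfₗ (x : H) : (H →L[ℂ] H) →ₗ[ℝ] ℝ where
  toFun T := T.reApplyInnerSelf x
  map_add' T S := by simp only [reApplyInnerSelf_apply, add_apply, inner_add_left, map_add]
  map_smul' r T := by
    simp only [reApplyInnerSelf_apply, smul_apply, RCLike.real_smul_eq_coe_smul (K := ℂ),
      inner_smul_real_left, RCLike.re_ofReal_mul, RingHom.id_apply, smul_eq_mul]

@[simp]
theorem reApplyInnerSelfₗ_apply (x : H) (T : H →L[ℂ] H) :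
    reApplyInnerSelfₗ x T = re ⟪T x, x⟫_ℂ :=
  rfl

theorem re_inner_algebraMap_apply (x : H) (r : ℝ) :
    re ⟪algebraMap ℝ (H →L[ℂ] H) r x, x⟫_ℂ = r * ‖x‖ ^ 2 := by
  rw [← reApplyInnerSelfₗ_apply, Algebra.algebraMap_eq_smul_one, map_smul,
    reApplyInnerSelfₗ_apply, one_apply_eq_self, inner_self_eq_norm_sq, smul_eq_mul]

theorem monotone_reApplyInnerSelfₗ (x : H) : Monotone (reApplyInnerSelfₗ x) := fun T S h => by
  simpa [inner_sub_left] using ((le_def T S).mp h).re_inner_nonneg_left x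

variable [CompleteSpace H]

theorem _root_.IsSelfAdjoint.re_inner_apply_self_mem {J : Set ℝ} (hJ : J.OrdConnected)
    {T : H →L[ℂ] H} (hT : IsSelfAdjoint T) (hσ : spectrum ℝ T ⊆ J) {x : H} (hx : ‖x‖ = 1) :
    re ⟪T x, x⟫_ℂ ∈ J := by
  have : Nontrivial H := ⟨⟨x, 0, by rintro rfl; simp at hx⟩⟩
  obtain ⟨m, hm, M, hM, hmT, hTM⟩ := hT.exists_algebraMap_le_le_algebraMap
  have hlow := monotone_reApplyInnerSelfₗ x hmT
  have hupp := monotone_reApplyInnerSelfₗ x hTM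
  rw [reApplyInnerSelfₗ_apply, reApplyInnerSelfₗ_apply, re_inner_algebraMap_apply, hx, one_pow,
    mul_one] at hlow hupp
  exact hJ.out (hσ hm) (hσ hM) ⟨hlow, hupp⟩

end Complex

end ContinuousLinearMap

open ContinuousLinearMap

/-- Scalar-weight reverse operator Jensen inequality. -/
theorem reverse_operator_jensen_weights {H : Type*}
    [NormedAddCommGroup H] [InnerProductSpace ℂ H] [CompleteSpace H]
    (f f' : ℝ → ℝ) (J : Set ℝ) (hf : ConvexOn ℝ J f)
    (hf' : ∀ t ∈ J, HasDerivAt f (f' t) t) (hf'c : ContinuousOn f' J)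
    (n : ℕ) (A : Fin n → H →L[ℂ] H) (w : Fin n → ℝ)
    (hA : ∀ i, IsSelfAdjoint (A i)) (hspec : ∀ i, spectrum ℝ (A i) ⊆ J)
    (hw : ∀ i, 0 < w i) (hw1 : ∑ i, w i = 1)
    (δ : ℝ)
    (hδ : δ = ⨆ x : {x : H // ‖x‖ = 1},
      (RCLike.re ⟪(∑ i, w i • (cfc f' (A i) * A i)) (x : H), (x : H)⟫_ℂ
        - RCLike.re ⟪(∑ i, w i • A i) (x : H), (x : H)⟫_ℂ
          * RCLike.re ⟪(∑ i, w i • cfc f' (A i)) (x : H), (x : H)⟫_ℂ)) :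
    ∑ i, w i • cfc f (A i) ≤
      cfc f (∑ i, w i • A i) + δ • (1 : H →L[ℂ] H) := by
  set B := ∑ i, w i • A i
  have hw0 : ∀ i, 0 ≤ w i := fun i => (hw i).le
  have hB : IsSelfAdjoint B := isSelfAdjoint_sum _ fun i _ => (IsSelfAdjoint.all (w i)).smul (hA i)
  have hσB : spectrum ℝ B ⊆ J := spectrum_sum_smul_subset_of_convex hf.1 hA hspec hw0 hw1
  rw [← Algebra.algebraMap_eq_smul_one]
  refine le_of_forall_norm_eq_one_re_inner_le
    (isSelfAdjoint_sum _ fun i _ => (IsSelfAdjoint.all (w i)).smul (cfc_predicate f (A i)))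
    ((cfc_predicate f B).add (IsSelfAdjoint.algebraMap _ (.all δ))) fun x hx => ?_
  set s := re ⟪B x, x⟫_ℂ
  have hs : s ∈ J := hB.re_inner_apply_self_mem hf.1.ordConnected hσB hx
  have hsum := monotone_reApplyInnerSelfₗ x (sum_smul_cfc_le hf hf' hf'c hA hspec hw0 hw1 hs)
  have hδx := hδ ▸ le_ciSup (bddAbove_range_re_inner_sub_mul _ B _) ⟨x, hx⟩
  have htangent := monotone_reApplyInnerSelfₗ x (algebraMap_add_smul_sub_le_cfc hf hf' hB hσB hs)
  change reApplyInnerSelfₗ x _ ≤ reApplyInnerSelfₗ x _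
  simp only [map_add, map_sub, map_smul, smul_eq_mul, reApplyInnerSelfₗ_apply,
    re_inner_algebraMap_apply, hx, one_pow, mul_one] at hsum htangent ⊢
  rw [sub_self, mul_zero, add_zero] at htangent
  linarith
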